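/- Let ν > 0 and let f = h + conj(g) be a sense-preserving harmonic mapping on 𝔻 with β*_ν(f) < ∞ and dilatation ω_f = g'/h'. Then for every z ∈ 𝔻 with |z| = r, max{|h(z) − h(0)|, |g(z)|} ≤ β*_ν(f) · √((1+|ω_f(0)|)/(1−|ω_f(0)|)) · h_ν(r), where h_ν(r) = −log(1−r) if ν = 1/2 and h_ν(r) = ((1−r)^{1/2−ν} − 1)/(ν − 1/2) if ν ≠ 1/2. -/

import Mathlib

/-!
The dilatation `ω = g'/h'` maps `𝔻` into itself, so Schwarz–Pick at the origin gives
`(1 - |z|²)(1 - |ω(0)|) ≤ (1 - |ω(z)|²)(1 + |ω(0)|)`. As `J_f = |h'|²(1 - |ω|²)`, the bound on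
`(1 - |z|²)^ν √|J_f|` turns into
`|g'(z)| ≤ |h'(z)| ≤ M √((1 + |ω(0)|)/(1 - |ω(0)|)) (1 - |z|)^{-(ν + 1/2)}`,
and integrating along the segment `[0, z]` gives the estimate, because `h_ν` is the primitive of
`(1 - r)^{-(ν + 1/2)}` vanishing at `0`.
-/

open Complex Metric Set ComplexConjugate

lemma sq_norm_one_sub_conj_mul_sub_sq_norm_sub (a w : ℂ) :
    ‖1 - conj a * w‖ ^ 2 - ‖w - a‖ ^ 2 = (1 - ‖a‖ ^ 2) * (1 - ‖w‖ ^ 2) := by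
  simp only [Complex.sq_norm, normSq_apply, sub_re, sub_im, mul_re, mul_im, one_re, one_im,
    conj_re, conj_im]
  ring

lemma norm_sub_lt_norm_one_sub_conj_mul {a w : ℂ} (ha : ‖a‖ < 1) (hw : ‖w‖ < 1) :
    ‖w - a‖ < ‖1 - conj a * w‖ := by
  have hpos : 0 < (1 - ‖a‖ ^ 2) * (1 - ‖w‖ ^ 2) :=
    mul_pos (by nlinarith [norm_nonneg a]) (by nlinarith [norm_nonneg w])
  rw [← sq_lt_sq₀ (norm_nonneg _) (norm_nonneg _)]
  linarith [sq_norm_one_sub_conj_mul_sub_sq_norm_sub a w]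

/-- Schwarz's lemma applied to `ω` followed by the disc automorphism
`w ↦ (w - ω 0) / (1 - conj (ω 0) * w)`, which sends `ω 0` to `0`. -/
theorem norm_sub_le_mul_norm_one_sub_conj_mul {ω : ℂ → ℂ}
    (hω : DifferentiableOn ℂ ω (ball 0 1)) (hmaps : MapsTo ω (ball 0 1) (ball 0 1))
    {z : ℂ} (hz : z ∈ ball 0 1) :
    ‖ω z - ω 0‖ ≤ ‖z‖ * ‖1 - conj (ω 0) * ω z‖ := by
  have hnorm : ∀ w ∈ ball (0 : ℂ) 1, ‖ω w‖ < 1 := fun w hw => mem_ball_zero_iff.mp (hmaps hw)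
  have hlt : ∀ w ∈ ball (0 : ℂ) 1, ‖ω w - ω 0‖ < ‖1 - conj (ω 0) * ω w‖ := fun w hw =>
    norm_sub_lt_norm_one_sub_conj_mul (hnorm 0 (mem_ball_self one_pos)) (hnorm w hw)
  have hden : ∀ w ∈ ball (0 : ℂ) 1, 1 - conj (ω 0) * ω w ≠ 0 := fun w hw =>
    norm_pos_iff.mp ((norm_nonneg _).trans_lt (hlt w hw))
  have hschwarz := Complex.norm_le_norm_of_mapsTo_ball
    (f := fun w => (ω w - ω 0) / (1 - conj (ω 0) * ω w))
    ((hω.sub_const _).div ((differentiableOn_const _).sub ((differentiableOn_const _).mul hω)) hden)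
    (fun w hw => by
      rw [mem_closedBall_zero_iff, norm_div]
      exact (div_lt_one (norm_pos_iff.mpr (hden w hw))).mpr (hlt w hw) |>.le)
    (by simp) (mem_ball_zero_iff.mp hz)
  rwa [norm_div, div_le_iff₀ (norm_pos_iff.mpr (hden z hz))] at hschwarz

theorem one_sub_sq_norm_mul_le_of_mapsTo_ball {ω : ℂ → ℂ}
    (hω : DifferentiableOn ℂ ω (ball 0 1)) (hmaps : MapsTo ω (ball 0 1) (ball 0 1))
    {z : ℂ} (hz : z ∈ ball 0 1) :
    (1 - ‖z‖ ^ 2) * (1 - ‖ω 0‖) ≤ (1 - ‖ω z‖ ^ 2) * (1 + ‖ω 0‖) := by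
  set a := ω 0
  set w := ω z
  have ha : ‖a‖ < 1 := mem_ball_zero_iff.mp (hmaps (mem_ball_self one_pos))
  have hw : ‖w‖ < 1 := mem_ball_zero_iff.mp (hmaps hz)
  have hr : ‖z‖ < 1 := mem_ball_zero_iff.mp hz
  have hpick := norm_sub_le_mul_norm_one_sub_conj_mul hω hmaps hz
  have hid := sq_norm_one_sub_conj_mul_sub_sq_norm_sub a w
  have hden : 1 - ‖a‖ ≤ ‖1 - conj a * w‖ := by
    have := norm_sub_norm_le (1 : ℂ) (conj a * w)
    rw [norm_one, norm_mul, norm_conj] at this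
    nlinarith [norm_nonneg a, norm_nonneg w]
  have h1 : ‖1 - conj a * w‖ ^ 2 * (1 - ‖z‖ ^ 2) ≤ (1 - ‖a‖ ^ 2) * (1 - ‖w‖ ^ 2) := by
    nlinarith [mul_le_mul hpick hpick (norm_nonneg _) (by positivity)]
  have h2 : (1 - ‖a‖) ^ 2 * (1 - ‖z‖ ^ 2) ≤ ‖1 - conj a * w‖ ^ 2 * (1 - ‖z‖ ^ 2) := by
    gcongr
    nlinarith [norm_nonneg z]
  nlinarith

noncomputable def dilatation (h g : ℂ → ℂ) (z : ℂ) : ℂ := deriv g z / deriv h z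

lemma differentiableOn_dilatation {h g : ℂ → ℂ} (hh : DifferentiableOn ℂ h (ball 0 1))
    (hg : DifferentiableOn ℂ g (ball 0 1)) (hsp : ∀ z ∈ ball (0 : ℂ) 1, ‖deriv g z‖ < ‖deriv h z‖) :
    DifferentiableOn ℂ (dilatation h g) (ball 0 1) :=
  ((hg.analyticOnNhd isOpen_ball).deriv.differentiableOn).div
    ((hh.analyticOnNhd isOpen_ball).deriv.differentiableOn)
    fun z hz => norm_pos_iff.mp ((norm_nonneg _).trans_lt (hsp z hz))

lemma mapsTo_dilatation {h g : ℂ → ℂ} (hsp : ∀ z ∈ ball (0 : ℂ) 1, ‖deriv g z‖ < ‖deriv h z‖) :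
    MapsTo (dilatation h g) (ball 0 1) (ball 0 1) := fun z hz => by
  rw [mem_ball_zero_iff, dilatation, norm_div]
  exact (div_lt_one ((norm_nonneg _).trans_lt (hsp z hz))).mpr (hsp z hz)

lemma sqrt_abs_sq_norm_sub_sq_norm {A B : ℂ} (hBA : ‖B‖ ≤ ‖A‖) :
    √|‖A‖ ^ 2 - ‖B‖ ^ 2| = ‖A‖ * √(1 - ‖B / A‖ ^ 2) := by
  rcases eq_or_ne A 0 with rfl | hA
  · simp_all
  have hfactor : ‖A‖ ^ 2 - ‖B‖ ^ 2 = ‖A‖ ^ 2 * (1 - ‖B / A‖ ^ 2) := by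
    rw [norm_div]; field_simp
  rw [abs_of_nonneg (sub_nonneg.mpr (pow_le_pow_left₀ (norm_nonneg _) hBA 2)), hfactor,
    Real.sqrt_mul (sq_nonneg _), Real.sqrt_sq (norm_nonneg _)]

theorem norm_deriv_le_of_bloch_bound {h g : ℂ → ℂ} {ν M : ℝ} (hν : 0 ≤ ν + 1 / 2)
    (hh : DifferentiableOn ℂ h (ball 0 1)) (hg : DifferentiableOn ℂ g (ball 0 1))
    (hsp : ∀ z ∈ ball (0 : ℂ) 1, ‖deriv g z‖ < ‖deriv h z‖)
    (hM : ∀ z ∈ ball (0 : ℂ) 1, (1 - ‖z‖ ^ 2) ^ ν * √|‖deriv h z‖ ^ 2 - ‖deriv g z‖ ^ 2| ≤ M)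
    {w : ℂ} (hw : w ∈ ball 0 1) :
    ‖deriv h w‖ ≤ M * √((1 + ‖dilatation h g 0‖) / (1 - ‖dilatation h g 0‖)) *
      (1 - ‖w‖) ^ (-(ν + 1 / 2)) := by
  set a := ‖dilatation h g 0‖
  set C := √((1 + a) / (1 - a))
  set D := ‖deriv h w‖
  set r := ‖w‖
  set s := ‖dilatation h g w‖
  have ha : a < 1 := mem_ball_zero_iff.mp (mapsTo_dilatation hsp (mem_ball_self one_pos))
  have hr : r < 1 := mem_ball_zero_iff.mp hw
  have hr2 : 0 < 1 - r ^ 2 := by nlinarith [norm_nonneg w]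
  have hpick : (1 - r ^ 2) * (1 - a) ≤ (1 - s ^ 2) * (1 + a) :=
    one_sub_sq_norm_mul_le_of_mapsTo_ball (differentiableOn_dilatation hh hg hsp)
      (mapsTo_dilatation hsp) hw
  have hjacobian : (1 - r ^ 2) ^ ν * (D * √(1 - s ^ 2)) ≤ M := by
    have := hM w hw
    rwa [sqrt_abs_sq_norm_sub_sq_norm (hsp w hw).le] at this
  have hsqrt : √(1 - r ^ 2) ≤ √(1 - s ^ 2) * C := by
    rw [← Real.sqrt_mul' _ (div_nonneg (by positivity) (by linarith))]
    refine Real.sqrt_le_sqrt ?_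
    rw [mul_div_assoc', le_div_iff₀ (by linarith)]
    exact hpick
  have hbound : (1 - r) ^ (ν + 1 / 2) * D ≤ M * C := calc
    (1 - r) ^ (ν + 1 / 2) * D ≤ (1 - r ^ 2) ^ (ν + 1 / 2) * D := by
      gcongr
      nlinarith [norm_nonneg w]
    _ = (1 - r ^ 2) ^ ν * D * √(1 - r ^ 2) := by
      rw [Real.sqrt_eq_rpow, Real.rpow_add hr2]; ring
    _ ≤ (1 - r ^ 2) ^ ν * D * (√(1 - s ^ 2) * C) := by gcongr
    _ = (1 - r ^ 2) ^ ν * (D * √(1 - s ^ 2)) * C := by ring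
    _ ≤ M * C := by gcongr
  rw [Real.rpow_neg (by linarith), ← div_eq_mul_inv, le_div_iff₀ (by positivity)]
  linarith

theorem norm_sub_le_of_norm_deriv_le {E : Type*} [NormedAddCommGroup E] [NormedSpace ℂ E]
    {φ : ℂ → E} {G G' : ℝ → ℝ} {R : ℝ} {z : ℂ}
    (hφ : DifferentiableOn ℂ φ (ball 0 R)) (hG : ∀ r ∈ Ico 0 R, HasDerivAt G (G' r) r)
    (hbound : ∀ w ∈ ball 0 R, ‖deriv φ w‖ ≤ G' ‖w‖) (hz : z ∈ ball 0 R) :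
    ‖φ z - φ 0‖ ≤ G ‖z‖ - G 0 := by
  have hz' : ‖z‖ < R := mem_ball_zero_iff.mp hz
  have hnorm : ∀ t ∈ Icc (0 : ℝ) 1, ‖(t : ℂ) * z‖ = t * ‖z‖ := fun t ht => by
    rw [norm_mul, norm_real, Real.norm_of_nonneg ht.1]
  have hradius : ∀ t ∈ Icc (0 : ℝ) 1, t * ‖z‖ ∈ Ico 0 R := fun t ht =>
    ⟨by have := ht.1; positivity, by nlinarith [ht.2, norm_nonneg z]⟩
  have hmem : ∀ t ∈ Icc (0 : ℝ) 1, (t : ℂ) * z ∈ ball 0 R := fun t ht => by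
    rw [mem_ball_zero_iff, hnorm t ht]; exact (hradius t ht).2
  have hf : ∀ t ∈ Icc (0 : ℝ) 1,
      HasDerivAt (fun t : ℝ => φ (t * z) - φ 0) (z • deriv φ (t * z)) t := fun t ht => by
    have hφt := (hφ.differentiableAt (isOpen_ball.mem_nhds (hmem t ht))).hasDerivAt
    have hray : HasDerivAt (fun t : ℝ => (t : ℂ) * z) z t := by
      simpa using (hasDerivAt_id (t : ℂ)).comp_ofReal.mul_const z
    exact (hφt.scomp t hray).sub_const (φ 0)
  have hB : ∀ t ∈ Icc (0 : ℝ) 1,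
      HasDerivAt (fun t => G (t * ‖z‖) - G 0) (G' (t * ‖z‖) * ‖z‖) t := fun t ht =>
    ((hG _ (hradius t ht)).comp t ((hasDerivAt_id t).mul_const ‖z‖)).sub_const (G 0)
      |>.congr_deriv (by simp)
  have hcompare := image_norm_le_of_norm_deriv_right_le_deriv_boundary'
    (fun t ht => (hf t ht).continuousAt.continuousWithinAt)
    (fun t ht => (hf t (Ico_subset_Icc_self ht)).hasDerivWithinAt)
    (by simp)
    (fun t ht => (hB t ht).continuousAt.continuousWithinAt)
    (fun t ht => (hB t (Ico_subset_Icc_self ht)).hasDerivWithinAt)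
    (fun t ht => by
      have ht' := Ico_subset_Icc_self ht
      rw [norm_smul, mul_comm]
      exact mul_le_mul_of_nonneg_right (hnorm t ht' ▸ hbound _ (hmem t ht')) (norm_nonneg z))
    (right_mem_Icc.mpr zero_le_one)
  simpa using hcompare

/-- The function `h_ν` of the statement. -/
noncomputable def blochGrowth (ν r : ℝ) : ℝ :=
  if ν = 1 / 2 then -Real.log (1 - r) else ((1 - r) ^ (1 / 2 - ν) - 1) / (ν - 1 / 2)

lemma blochGrowth_zero (ν : ℝ) : blochGrowth ν 0 = 0 := by
  simp [blochGrowth]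

lemma hasDerivAt_blochGrowth (ν : ℝ) {r : ℝ} (hr : r < 1) :
    HasDerivAt (blochGrowth ν) ((1 - r) ^ (-(ν + 1 / 2))) r := by
  have hpos : 0 < 1 - r := by linarith
  have hlin : HasDerivAt (fun t : ℝ => 1 - t) (-1) r := by
    simpa using (hasDerivAt_id r).const_sub 1
  unfold blochGrowth
  by_cases hν : ν = 1 / 2
  · simp only [hν, if_true]
    refine (hlin.log hpos.ne').neg.congr_deriv ?_
    norm_num [Real.rpow_neg_one, neg_div]
  · simp only [hν, if_false]
    refine (((hlin.rpow_const (Or.inl hpos.ne')).sub_const 1).div_const (ν - 1 / 2)).congr_deriv ?_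
    rw [show 1 / 2 - ν - 1 = -(ν + 1 / 2) by ring, show -1 * (1 / 2 - ν) = ν - 1 / 2 by ring,
      mul_div_right_comm, div_self (sub_ne_zero.mpr hν), one_mul]

/-- Growth estimate: if `f = h + conj g` is a sense-preserving harmonic mapping on `𝔻`
with `β*_ν(f) ≤ M` and dilatation `ω_f = g'/h'`, then for `|z| = r < 1`,
`max{|h(z) − h(0)|, |g(z)|} ≤ M √((1+|ω_f(0)|)/(1−|ω_f(0)|)) h_ν(r)`, where
`h_ν(r) = −log(1−r)` if `ν = 1/2` and `h_ν(r) = ((1−r)^{1/2−ν} − 1)/(ν − 1/2)` otherwise. -/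
theorem growth_estimate_Bloch_type
    (ν : ℝ) (hν : 0 < ν) (h g : ℂ → ℂ)
    (hh : DifferentiableOn ℂ h (ball 0 1))
    (hg : DifferentiableOn ℂ g (ball 0 1))
    (hg0 : g 0 = 0)
    (hsp : ∀ z ∈ ball (0 : ℂ) 1, ‖deriv g z‖ < ‖deriv h z‖)
    (M : ℝ)
    (hM : ∀ z ∈ ball (0 : ℂ) 1,
      (1 - ‖z‖ ^ 2) ^ ν *
        Real.sqrt |‖deriv h z‖ ^ 2 - ‖deriv g z‖ ^ 2| ≤ M) :
    ∀ z ∈ ball (0 : ℂ) 1,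
      max (‖h z - h 0‖) (‖g z‖)
        ≤ M * Real.sqrt ((1 + ‖deriv g 0 / deriv h 0‖)
            / (1 - ‖deriv g 0 / deriv h 0‖)) *
          (if ν = 1 / 2 then -Real.log (1 - ‖z‖)
            else ((1 - ‖z‖) ^ (1 / 2 - ν) - 1) / (ν - 1 / 2)) := by
  intro z hz
  set K := M * √((1 + ‖dilatation h g 0‖) / (1 - ‖dilatation h g 0‖))
  have hh' : ∀ w ∈ ball (0 : ℂ) 1, ‖deriv h w‖ ≤ K * (1 - ‖w‖) ^ (-(ν + 1 / 2)) :=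
    fun w hw => norm_deriv_le_of_bloch_bound (by linarith) hh hg hsp hM hw
  have hg' : ∀ w ∈ ball (0 : ℂ) 1, ‖deriv g w‖ ≤ K * (1 - ‖w‖) ^ (-(ν + 1 / 2)) :=
    fun w hw => (hsp w hw).le.trans (hh' w hw)
  have hG : ∀ r ∈ Ico (0 : ℝ) 1,
      HasDerivAt (fun r => K * blochGrowth ν r) (K * (1 - r) ^ (-(ν + 1 / 2))) r :=
    fun r hr => (hasDerivAt_blochGrowth ν hr.2).const_mul K
  have hgrowth_h := norm_sub_le_of_norm_deriv_le hh hG hh' hz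
  have hgrowth_g := norm_sub_le_of_norm_deriv_le hg hG hg' hz
  simp only [blochGrowth_zero, mul_zero, sub_zero, hg0] at hgrowth_h hgrowth_g
  exact max_le hgrowth_h hgrowth_g
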